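/- arXiv:1212.0839 — 3 statements merged into one kernel-verified Lean document; each statement's English description precedes it below -/
import Mathlib

section
/- The Stieltjes transform m(z) = ∫ ρ_sc(x)/(x−z) dx of the semicircle density ρ_sc(x) = (1/2π)√((4−x²)₊) satisfies the self-consistent equation m(z) + 1/m(z) + z = 0 for every z in the upper half plane, and is given explicitly by m(z) = (−z + √(z²−4))/2 with the branch of the square root chosen so that √(z²−4) ∼ z as z → ∞. -/
open MeasureTheory

/-- The Wigner semicircle density `ρ_sc(x) = (1/(2π))·√((4−x²)₊)`. -/
noncomputable def rhoSC (x : ℝ) : ℝ := (1 / (2 * Real.pi)) * Real.sqrt (max (4 - x ^ 2) 0)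

/-- The Stieltjes transform `m(z) = ∫ ρ_sc(x)/(x−z) dx`. -/
noncomputable def mSC (z : ℂ) : ℂ := ∫ x : ℝ, (rhoSC x : ℂ) / ((x : ℂ) - z)

/-!
On the imaginary axis the symmetry `x ↦ -x` of `ρ_sc` gives
`m(iy) = (iy/π) ∫_{-2}^{2} √(4-x²)/(x²+y²) dx`, and an explicit arcsin antiderivative evaluates
this to `i(√(4+y²) - y)/2`. Both `m` and `z ↦ (-z + i√(4-z²))/2` are holomorphic on the upper half
plane (there `4 - z²` stays off the negative real axis), so they coincide by the identity theorem.
Then `w = i√(4-z²)` has `w² = z² - 4` and `Im w = Re √(4-z²) > 0`, and `m = (-z + w)/2` is a root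
of `m² + zm + 1 = 0`.
-/

open Complex Set Filter Topology Metric

section RealIntegral

open Real

lemma hasDerivAt_arcsin_div_two {x : ℝ} (hx : x ∈ Ioo (-2 : ℝ) 2) :
    HasDerivAt (fun t => arcsin (t / 2)) (√(4 - x ^ 2))⁻¹ x := by
  obtain ⟨h₁, h₂⟩ := hx
  have hroot : √(1 - (x / 2) ^ 2) = √(4 - x ^ 2) / 2 := by
    rw [← sqrt_sq (by positivity : 0 ≤ √(4 - x ^ 2) / 2), div_pow (√(4 - x ^ 2)),
      sq_sqrt (by nlinarith)]
    ring_nf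
  refine ((hasDerivAt_arcsin (x := x / 2) (by linarith) (by linarith)).comp x
    ((hasDerivAt_id x).div_const 2)).congr_deriv ?_
  rw [hroot]
  field_simp

lemma hasDerivAt_arcsin_mul_div_two_sqrt_sq_add_sq {y x : ℝ} (hy : 0 < y)
    (hx : x ∈ Ioo (-2 : ℝ) 2) :
    HasDerivAt (fun t => arcsin (√(4 + y ^ 2) * t / (2 * √(t ^ 2 + y ^ 2))))
      (y * √(4 + y ^ 2) / ((x ^ 2 + y ^ 2) * √(4 - x ^ 2))) x := by
  obtain ⟨h₁, h₂⟩ := hx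
  set W := √(4 + y ^ 2)
  set r := √(x ^ 2 + y ^ 2) with hr
  set s := √(4 - x ^ 2)
  have hW2 : W ^ 2 = 4 + y ^ 2 := sq_sqrt (by positivity)
  have hr2 : r ^ 2 = x ^ 2 + y ^ 2 := sq_sqrt (by positivity)
  have hs2 : s ^ 2 = 4 - x ^ 2 := sq_sqrt (by nlinarith)
  have hr0 : 0 < r := sqrt_pos.2 (by positivity)
  have hs0 : 0 < s := sqrt_pos.2 (by nlinarith)
  have hsq : 1 - (W * x / (2 * r)) ^ 2 = (y * s / (2 * r)) ^ 2 := by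
    field_simp
    linear_combination (-x ^ 2) * hW2 + 4 * hr2 - y ^ 2 * hs2
  have hroot : √(1 - (W * x / (2 * r)) ^ 2) = y * s / (2 * r) := by
    rw [hsq, sqrt_sq (by positivity)]
  have hu : W * x / (2 * r) ≠ 1 ∧ W * x / (2 * r) ≠ -1 := by
    have hpos : 0 < (y * s / (2 * r)) ^ 2 := by positivity
    constructor <;> intro h <;> rw [h] at hsq <;> linarith
  have hden := (((hasDerivAt_pow 2 x).add_const (y ^ 2)).sqrt (by positivity)).const_mul 2
  refine ((hasDerivAt_arcsin hu.2 hu.1).comp x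
    (((hasDerivAt_id x).const_mul W).div hden (by positivity))).congr_deriv ?_
  simp only [hroot, id, Nat.cast_ofNat, ← hr]
  field_simp
  linear_combination W * x ^ 2 * hr2

theorem integral_sqrt_four_sub_sq_div_sq_add_sq {y : ℝ} (hy : 0 < y) :
    ∫ x in (-2 : ℝ)..2, √(4 - x ^ 2) / (x ^ 2 + y ^ 2) = π * (√(4 + y ^ 2) - y) / y := by
  set W := √(4 + y ^ 2) with hW
  have hW2 : W ^ 2 = 4 + y ^ 2 := sq_sqrt (by positivity)
  have hW0 : 0 < W := sqrt_pos.2 (by positivity)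
  -- `√(4-x²)/(x²+y²) = W²/((x²+y²)√(4-x²)) - 1/√(4-x²)`; the arcsin form of the antiderivative
  -- of the first term, unlike the arctan form, stays continuous at `x = ±2`.
  let F : ℝ → ℝ := fun t => W / y * arcsin (W * t / (2 * √(t ^ 2 + y ^ 2))) - arcsin (t / 2)
  have hF : ∀ x ∈ Ioo (-2 : ℝ) 2, HasDerivAt F (√(4 - x ^ 2) / (x ^ 2 + y ^ 2)) x := by
    intro x hx
    refine (((hasDerivAt_arcsin_mul_div_two_sqrt_sq_add_sq hy hx).const_mul (W / y)).sub
      (hasDerivAt_arcsin_div_two hx)).congr_deriv ?_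
    have hs : 0 < √(4 - x ^ 2) := sqrt_pos.2 (by nlinarith [hx.1, hx.2])
    field_simp
    rw [← hW, sq_sqrt (by nlinarith [hx.1, hx.2])]
    linear_combination hW2
  have hFcont : Continuous F := by
    fun_prop (disch := intro t; positivity)
  have hF_endpoint : ∀ t : ℝ, t ^ 2 = 4 → W * t / (2 * √(t ^ 2 + y ^ 2)) = t / 2 := by
    intro t ht
    rw [ht, ← hW]
    field_simp
  rw [intervalIntegral.integral_eq_sub_of_hasDerivAt_of_le (by norm_num) hFcont.continuousOn hF]
  · simp only [F, hF_endpoint 2 (by norm_num), hF_endpoint (-2) (by norm_num)]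
    rw [div_self two_ne_zero, neg_div_self two_ne_zero, arcsin_one, arcsin_neg_one]
    field_simp
    ring
  · refine Continuous.intervalIntegrable ?_ _ _
    fun_prop (disch := intro t; positivity)

end RealIntegral

lemma abs_im_le_norm_ofReal_sub (x : ℝ) (z : ℂ) : |z.im| ≤ ‖(x : ℂ) - z‖ := by
  simpa using abs_im_le_norm ((x : ℂ) - z)

lemma ofReal_sub_mul_I_ne_zero (x : ℝ) {y : ℝ} (hy : y ≠ 0) : (x : ℂ) - y * I ≠ 0 := by
  intro h
  simpa [hy] using congrArg im h

theorem hasDerivAt_div_ofReal_sub (c : ℂ) (x : ℝ) {z : ℂ} (hz : (x : ℂ) - z ≠ 0) :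
    HasDerivAt (fun w : ℂ => c / ((x : ℂ) - w)) (c / ((x : ℂ) - z) ^ 2) z := by
  refine ((((hasDerivAt_id z).const_sub (x : ℂ)).inv hz).const_mul c).congr_deriv ?_
  simp only [id]
  field_simp

theorem differentiableOn_integral_div_ofReal_sub {f : ℝ → ℂ} (hf : Integrable f) :
    DifferentiableOn ℂ (fun z : ℂ => ∫ x : ℝ, f x / ((x : ℂ) - z)) {z | z.im ≠ 0} := by
  intro z₀ hz₀
  set ε := |z₀.im| / 2 with hε
  have hε0 : 0 < ε := by have := abs_pos.2 hz₀; positivity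
  have hdist : ∀ z ∈ ball z₀ ε, ∀ x : ℝ, ε ≤ ‖(x : ℂ) - z‖ := by
    intro z hz x
    have h₁ : |z₀.im| - |z.im| ≤ ‖z - z₀‖ :=
      (abs_sub_abs_le_abs_sub _ _).trans (by simpa [abs_sub_comm] using abs_im_le_norm (z - z₀))
    have h₂ := abs_im_le_norm_ofReal_sub x z
    rw [mem_ball, dist_eq] at hz
    linarith
  have hne : ∀ z ∈ ball z₀ ε, ∀ x : ℝ, (x : ℂ) - z ≠ 0 := fun z hz x h =>
    by simpa [h] using (hdist z hz x).trans_lt' hε0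
  have hmeas : ∀ g : ℝ → ℂ, Continuous g → AEStronglyMeasurable (fun x => f x / g x) :=
    fun g hg => (hf.aemeasurable.div hg.aemeasurable).aestronglyMeasurable
  have key := hasDerivAt_integral_of_dominated_loc_of_deriv_le (μ := volume)
    (F' := fun z (x : ℝ) => f x / ((x : ℂ) - z) ^ 2) (bound := fun x => ‖f x‖ / ε ^ 2)
    (ball_mem_nhds z₀ hε0) (Eventually.of_forall fun z => hmeas _ (by fun_prop)) ?_
    (hmeas _ (by fun_prop)) (Eventually.of_forall fun x z hz => ?_) (hf.norm.div_const _)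
    (Eventually.of_forall fun x z hz => hasDerivAt_div_ofReal_sub _ x (hne z hz x))
  · exact key.2.differentiableAt.differentiableWithinAt
  · refine (hf.norm.div_const ε).mono' (hmeas _ (by fun_prop)) (Eventually.of_forall fun x => ?_)
    rw [norm_div]
    gcongr
    exact hdist z₀ (mem_ball_self hε0) x
  · rw [norm_div, norm_pow]
    gcongr
    exact hdist z hz x

theorem AnalyticOnNhd.eqOn_upperHalfPlane_of_eq_on_imaginary_axis {f g : ℂ → ℂ}
    (hf : AnalyticOnNhd ℂ f {z | 0 < z.im}) (hg : AnalyticOnNhd ℂ g {z | 0 < z.im})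
    (hfg : ∀ y : ℝ, 0 < y → f (y * I) = g (y * I)) : EqOn f g {z | 0 < z.im} := by
  refine hf.eqOn_of_preconnected_of_frequently_eq hg (convex_halfSpace_im_gt 0).isPreconnected
    (z₀ := I) (by simp) ?_
  have hmap : Tendsto (fun y : ℝ => (y : ℂ) * I) (𝓝[≠] 1) (𝓝[≠] I) := by
    refine tendsto_nhdsWithin_of_tendsto_nhds_of_eventually_within _ ?_ ?_
    · exact ((by fun_prop : Continuous fun y : ℝ => (y : ℂ) * I).tendsto' 1 I (by simp)).mono_left
        nhdsWithin_le_nhds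
    · filter_upwards [self_mem_nhdsWithin] with y hy
      simpa using hy
  refine hmap.frequently (Eventually.frequently ?_)
  filter_upwards [nhdsWithin_le_nhds (lt_mem_nhds one_pos)] with y hy using hfg y hy

lemma Complex.sq_sqrt (a : ℂ) : Complex.sqrt a ^ 2 = a :=
  cpow_ofNat_inv_pow a 2

lemma Complex.re_sqrt_pos {a : ℂ} (ha : a ∈ slitPlane) : 0 < (Complex.sqrt a).re := by
  rw [Complex.sqrt, cpow_inv_two_re, Real.sqrt_pos]
  rcases mem_slitPlane_iff.1 ha with h | h
  · linarith [re_le_norm a]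
  · linarith [neg_abs_le a.re, abs_re_lt_norm.2 h]

lemma Complex.sqrt_ofReal {x : ℝ} (hx : 0 ≤ x) : Complex.sqrt x = Real.sqrt x := by
  rw [Complex.sqrt_of_nonneg (zero_le_real.2 hx), ofReal_re]

lemma four_sub_sq_mem_slitPlane {z : ℂ} (hz : 0 < z.im) : 4 - z ^ 2 ∈ slitPlane := by
  rw [mem_slitPlane_iff]
  by_cases hre : z.re = 0
  · left
    simp only [sub_re, re_ofNat, sq, mul_re, hre]
    nlinarith
  · right
    simp only [sub_im, sq, mul_im, im_ofNat]
    intro h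
    exact mul_ne_zero hre hz.ne' (by linarith)

lemma add_one_div_add_eq_zero {m z w : ℂ} (hw : w ^ 2 = z ^ 2 - 4) (hm : m = (-z + w) / 2) :
    m + 1 / m + z = 0 := by
  have hquad : m ^ 2 + z * m + 1 = 0 := by
    rw [hm]
    linear_combination hw / 4
  have hm0 : m ≠ 0 := by
    rintro rfl
    simp at hquad
  field_simp
  linear_combination hquad

section Semicircle

open Real

lemma rhoSC_eq (x : ℝ) : rhoSC x = √(4 - x ^ 2) / (2 * π) := by
  rw [rhoSC, one_div_mul_eq_div]
  rcases le_total 0 (4 - x ^ 2) with h | h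
  · rw [max_eq_left h]
  · rw [max_eq_right h, Real.sqrt_zero, sqrt_eq_zero'.2 h]

lemma support_rhoSC : Function.support rhoSC ⊆ Ioo (-2) 2 := by
  intro x hx
  rw [Function.mem_support, rhoSC_eq, div_ne_zero_iff, sqrt_ne_zero'] at hx
  constructor <;> nlinarith [hx.1]

lemma continuous_rhoSC : Continuous rhoSC := by
  simp only [funext rhoSC_eq]
  fun_prop

lemma integrable_rhoSC : Integrable rhoSC :=
  continuous_rhoSC.integrable_of_hasCompactSupport <|
    HasCompactSupport.intro' isCompact_Icc isClosed_Icc fun _ hx =>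
      Function.notMem_support.1 fun h => hx (Ioo_subset_Icc_self (support_rhoSC h))

lemma mSC_eq_intervalIntegral (z : ℂ) :
    mSC z = ∫ x in (-2 : ℝ)..2, (rhoSC x : ℂ) / ((x : ℂ) - z) := by
  refine (intervalIntegral.integral_eq_integral_of_support_subset fun x hx => ?_).symm
  refine Ioo_subset_Ioc_self (support_rhoSC fun h => hx ?_)
  simp [h]

lemma mSC_ofReal_mul_I {y : ℝ} (hy : 0 < y) : mSC (y * I) = (√(4 + y ^ 2) - y) / 2 * I := by
  set f : ℝ → ℂ := fun x => (rhoSC x : ℂ) / ((x : ℂ) - y * I)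
  have hf : Continuous f := by
    have := fun x => ofReal_sub_mul_I_ne_zero x hy.ne'
    have := continuous_rhoSC
    fun_prop (disch := assumption)
  have hf_neg : Continuous fun x => f (-x) := hf.comp continuous_neg
  have hsymm : ∫ x in (-2 : ℝ)..2, f (-x) = ∫ x in (-2 : ℝ)..2, f x := by
    rw [intervalIntegral.integral_comp_neg]
    norm_num
  have hsum : ∀ x : ℝ, f x + f (-x) = ((√(4 - x ^ 2) / (x ^ 2 + y ^ 2) : ℝ) : ℂ) * (y / π * I) := by
    intro x
    have h₁ := ofReal_sub_mul_I_ne_zero x hy.ne'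
    have h₂ := ofReal_sub_mul_I_ne_zero (-x) hy.ne'
    have h₃ : (x : ℂ) ^ 2 + (y : ℂ) ^ 2 ≠ 0 := by exact_mod_cast (by positivity : x ^ 2 + y ^ 2 ≠ 0)
    simp only [f, rhoSC_eq]
    push_cast at h₂ ⊢
    field_simp
    linear_combination (-2 * √(4 - x ^ 2) * y ^ 3 * I) * I_sq
  have h2m : 2 * mSC (y * I) = (√(4 + y ^ 2) - y) * I := by
    have hy0 : (y : ℂ) ≠ 0 := by exact_mod_cast hy.ne'
    rw [two_mul, mSC_eq_intervalIntegral]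
    nth_rw 2 [← hsymm]
    rw [← intervalIntegral.integral_add (hf.intervalIntegrable _ _) (hf_neg.intervalIntegrable _ _)]
    simp only [hsum, intervalIntegral.integral_mul_const, intervalIntegral.integral_ofReal,
      integral_sqrt_four_sub_sq_div_sq_add_sq hy]
    push_cast
    field_simp
  linear_combination h2m / 2

end Semicircle

lemma mSC_eq_of_im_pos {z : ℂ} (hz : 0 < z.im) :
    mSC z = (-z + I * Complex.sqrt (4 - z ^ 2)) / 2 := by
  have hopen : IsOpen {z : ℂ | 0 < z.im} := isOpen_lt continuous_const continuous_im
  refine AnalyticOnNhd.eqOn_upperHalfPlane_of_eq_on_imaginary_axis (f := mSC)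
    (g := fun z => (-z + I * Complex.sqrt (4 - z ^ 2)) / 2) ?_ ?_ (fun y hy => ?_) hz
  · exact ((differentiableOn_integral_div_ofReal_sub integrable_rhoSC.ofReal).mono
      fun z hz => ne_of_gt hz).analyticOnNhd hopen
  · refine DifferentiableOn.analyticOnNhd (fun z hz => ?_) hopen
    refine DifferentiableAt.differentiableWithinAt ?_
    have := differentiableAt_sqrt (four_sub_sq_mem_slitPlane hz)
    fun_prop
  · have h4 : (4 : ℂ) - (y * I) ^ 2 = ((4 + y ^ 2 : ℝ) : ℂ) := by
      push_cast
      linear_combination (-(y : ℂ) ^ 2) * I_sq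
    rw [mSC_ofReal_mul_I hy, h4, Complex.sqrt_ofReal (by positivity)]
    ring

/-- The Stieltjes transform of the semicircle law satisfies the self-consistent equation
`m + 1/m + z = 0` on the upper half plane, and is given by `m(z) = (−z + √(z²−4))/2`,
where the branch of the square root is the one with positive imaginary part
(equivalently, the branch with `√(z²−4) ∼ z` as `z → ∞`). -/
theorem stieltjes_transform_semicircle (z : ℂ) (hz : 0 < z.im) :
    mSC z + 1 / mSC z + z = 0 ∧
      ∃ w : ℂ, w ^ 2 = z ^ 2 - 4 ∧ 0 < w.im ∧ mSC z = (-z + w) / 2 := by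
  set w := I * Complex.sqrt (4 - z ^ 2)
  have hw : w ^ 2 = z ^ 2 - 4 := by
    rw [mul_pow, I_sq, Complex.sq_sqrt]
    ring
  have hw_im : 0 < w.im := by
    simpa [w] using Complex.re_sqrt_pos (four_sub_sq_mem_slitPlane hz)
  exact ⟨add_one_div_add_eq_zero hw (mSC_eq_of_im_pos hz), w, hw, hw_im, mSC_eq_of_im_pos hz⟩
end

section
/- Discrete critical Gagliardo–Nirenberg inequality: there exists a constant C > 0 such that for every finitely supported function f : ℤ → ℝ, ‖f‖₄⁴ ≤ C·‖f‖₂²·Σ_{i ≠ j} |f_i − f_j|²/(i − j)², where ‖f‖_p^p = Σ_i |f_i|^p. -/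
/-
The inequality is local. Let `dᵢ = Σ_j |f_i − f_j|²/(i − j)²`. For every site `i` and window
length `L`, comparing `f i` with the values at `i + 1, …, i + L` gives
`L f_i² ≤ 2‖f‖₂² + 2L² dᵢ`. Choosing `L ≈ f_i² / dᵢ` yields `f_i⁴ ≤ 32 ‖f‖₂² dᵢ`, and summing
over `i` gives the claim with `C = 32`.
-/

/-- Division by zero gives `0`, so the diagonal terms `p.1 = p.2` vanish without a case split. -/
noncomputable def pairEnergy (f : ℤ → ℝ) (p : ℤ × ℤ) : ℝ :=
  (f p.1 - f p.2) ^ 2 / ((p.1 : ℝ) - p.2) ^ 2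

section

variable {f : ℤ → ℝ}

lemma pairEnergy_nonneg (p : ℤ × ℤ) : 0 ≤ pairEnergy f p := by
  unfold pairEnergy; positivity

lemma ite_ne_eq_pairEnergy (p : ℤ × ℤ) :
    (if p.1 ≠ p.2 then (f p.1 - f p.2) ^ 2 / ((p.1 : ℝ) - p.2) ^ 2 else 0) = pairEnergy f p := by
  split_ifs with h
  · rfl
  · simp [pairEnergy, not_not.mp h]

lemma summable_sq_div_sq_sub (hf : Summable fun i => f i ^ 2) :
    Summable fun p : ℤ × ℤ => f p.1 ^ 2 / ((p.1 : ℝ) - p.2) ^ 2 := by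
  have hprod : Summable fun q : ℤ × ℤ => f q.1 ^ 2 * (1 / (q.2 : ℝ) ^ 2) :=
    hf.mul_of_nonneg (Real.summable_one_div_int_pow.mpr one_lt_two)
      (fun _ => sq_nonneg _) (fun _ => by positivity)
  have hshear : Function.Injective fun p : ℤ × ℤ => (p.1, p.1 - p.2) := by
    intro p q h
    simp only [Prod.mk.injEq] at h
    exact Prod.ext h.1 (by omega)
  refine (hprod.comp_injective hshear).congr fun p => ?_
  simp [div_eq_mul_inv]

lemma summable_pairEnergy (hf : Summable fun i => f i ^ 2) : Summable (pairEnergy f) := by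
  have hleft := summable_sq_div_sq_sub hf
  have hright : Summable fun p : ℤ × ℤ => f p.2 ^ 2 / ((p.1 : ℝ) - p.2) ^ 2 :=
    (hleft.comp_injective Prod.swap_injective).congr fun p => by simp [sub_sq_comm]
  refine .of_nonneg_of_le pairEnergy_nonneg (fun p => ?_) ((hleft.add hright).mul_left 2)
  have hsq : (f p.1 - f p.2) ^ 2 ≤ 2 * (f p.1 ^ 2 + f p.2 ^ 2) := by
    nlinarith [sq_nonneg (f p.1 + f p.2)]
  calc pairEnergy f p ≤ 2 * (f p.1 ^ 2 + f p.2 ^ 2) / ((p.1 : ℝ) - p.2) ^ 2 :=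
        div_le_div_of_nonneg_right hsq (sq_nonneg _)
    _ = _ := by rw [mul_div_assoc, add_div]

lemma sq_sub_le_mul_pairEnergy {i j : ℤ} {L : ℝ} (hij : |(i : ℝ) - j| ≤ L) (hne : i ≠ j) :
    (f i - f j) ^ 2 ≤ L ^ 2 * pairEnergy f (i, j) := by
  have hpos : 0 < ((i : ℝ) - j) ^ 2 := by
    have : (i : ℝ) - j ≠ 0 := sub_ne_zero.mpr (Int.cast_injective.ne hne)
    positivity
  calc (f i - f j) ^ 2 = ((i : ℝ) - j) ^ 2 * pairEnergy f (i, j) :=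
        (mul_div_cancel₀ _ hpos.ne').symm
    _ ≤ L ^ 2 * pairEnergy f (i, j) :=
        mul_le_mul_of_nonneg_right (sq_le_sq' (abs_le.mp hij).1 (abs_le.mp hij).2)
          (pairEnergy_nonneg _)

/-- Averaging `f_i² ≤ 2 f_j² + 2 (f_i - f_j)²` over the window `j = i + 1, …, i + L`. -/
lemma natCast_mul_sq_le_tsum_sq_add_tsum_pairEnergy (hf : Summable fun i => f i ^ 2)
    (i : ℤ) (L : ℕ) :
    L * f i ^ 2 ≤ 2 * ∑' j, f j ^ 2 + 2 * L ^ 2 * ∑' j, pairEnergy f (i, j) := by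
  let window : Finset ℤ :=
    (Finset.Icc 1 L).map ⟨fun k : ℕ => i + k, fun a b h => by simpa using h⟩
  have hterm : ∀ j ∈ window, f i ^ 2 ≤ 2 * f j ^ 2 + 2 * L ^ 2 * pairEnergy f (i, j) := by
    intro j hj
    obtain ⟨k, hk, rfl⟩ := Finset.mem_map.mp hj
    obtain ⟨hk1, hkL⟩ := Finset.mem_Icc.mp hk
    change f i ^ 2 ≤ 2 * f (i + k) ^ 2 + 2 * L ^ 2 * pairEnergy f (i, i + k)
    have hdist : |(i : ℝ) - ↑(i + k : ℤ)| ≤ L := by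
      push_cast
      rw [sub_add_cancel_left, abs_neg, Nat.abs_cast]
      exact_mod_cast hkL
    have := sq_sub_le_mul_pairEnergy (f := f) hdist (by omega)
    nlinarith [sq_nonneg (f i - 2 * f (i + k))]
  calc (L : ℝ) * f i ^ 2 = ∑ _j ∈ window, f i ^ 2 := by simp [window]
    _ ≤ ∑ j ∈ window, (2 * f j ^ 2 + 2 * L ^ 2 * pairEnergy f (i, j)) := Finset.sum_le_sum hterm
    _ = 2 * ∑ j ∈ window, f j ^ 2 + 2 * L ^ 2 * ∑ j ∈ window, pairEnergy f (i, j) := by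
        rw [Finset.sum_add_distrib, Finset.mul_sum, Finset.mul_sum]
    _ ≤ 2 * ∑' j, f j ^ 2 + 2 * L ^ 2 * ∑' j, pairEnergy f (i, j) := by
        gcongr
        · exact hf.sum_le_tsum _ fun _ _ => sq_nonneg _
        · exact ((summable_pairEnergy hf).prod_factor i).sum_le_tsum _
            fun _ _ => pairEnergy_nonneg _

/-- Optimising `L * a ≤ 2 A + 2 L² d` over `L`: take `L = ⌊a / (4 d)⌋`. -/
lemma sq_le_of_forall_nat_mul_le {a A d : ℝ} (ha : 0 ≤ a) (haA : a ≤ A) (hd : 0 ≤ d)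
    (h : ∀ L : ℕ, L * a ≤ 2 * A + 2 * L ^ 2 * d) : a ^ 2 ≤ 32 * A * d := by
  rcases le_or_gt a (8 * d) with hsmall | hlarge
  · nlinarith
  have hd : 0 < d := by
    rcases hd.eq_or_lt with rfl | hd
    · obtain ⟨L, hL⟩ := exists_nat_gt (2 * A / a)
      have ha : 0 < a := by linarith
      have := h L
      rw [div_lt_iff₀ ha] at hL
      nlinarith
    · exact hd
  set L := ⌊a / (4 * d)⌋₊
  have hLle : (L : ℝ) * (4 * d) ≤ a :=
    (le_div_iff₀ (by positivity)).mp (Nat.floor_le (by positivity))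
  have hLgt : a < ((L : ℝ) + 1) * (4 * d) :=
    (div_lt_iff₀ (by positivity)).mp (Nat.lt_floor_add_one _)
  nlinarith [h L]

theorem tsum_pow_four_le_of_summable_sq (hf : Summable fun i => f i ^ 2) :
    ∑' i, f i ^ 4 ≤ 32 * (∑' i, f i ^ 2) * ∑' p, pairEnergy f p := by
  have hE := summable_pairEnergy hf
  have hlocal : ∀ i, f i ^ 4 ≤ 32 * (∑' j, f j ^ 2) * ∑' j, pairEnergy f (i, j) := fun i => by
    have := sq_le_of_forall_nat_mul_le (sq_nonneg (f i)) (hf.le_tsum i fun j _ => sq_nonneg _)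
      (tsum_nonneg fun j => pairEnergy_nonneg (i, j))
      (natCast_mul_sq_le_tsum_sq_add_tsum_pairEnergy hf i)
    linarith [pow_mul (f i) 2 2]
  have hrows : Summable fun i => 32 * (∑' j, f j ^ 2) * ∑' j, pairEnergy f (i, j) :=
    hE.prod.mul_left _
  calc ∑' i, f i ^ 4 ≤ ∑' i, 32 * (∑' j, f j ^ 2) * ∑' j, pairEnergy f (i, j) :=
        Summable.tsum_le_tsum hlocal (.of_nonneg_of_le (fun i => by positivity) hlocal hrows) hrows
    _ = 32 * (∑' i, f i ^ 2) * ∑' p, pairEnergy f p := by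
        rw [tsum_mul_left, hE.tsum_prod' hE.prod_factor]

end

/-- Discrete critical Gagliardo–Nirenberg inequality: there exists `C > 0` such that for
every finitely supported `f : ℤ → ℝ`,
`‖f‖₄⁴ ≤ C·‖f‖₂²·Σ_{i ≠ j} |f_i − f_j|²/(i − j)²`. -/
theorem discrete_gagliardo_nirenberg :
    ∃ C : ℝ, 0 < C ∧
      ∀ f : ℤ → ℝ, (Function.support f).Finite →
        ∑' i : ℤ, f i ^ 4 ≤
          C * (∑' i : ℤ, f i ^ 2) *
            ∑' p : ℤ × ℤ,
              if p.1 ≠ p.2 then (f p.1 - f p.2) ^ 2 / ((p.1 : ℝ) - (p.2 : ℝ)) ^ 2 else 0 := by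
  refine ⟨32, by norm_num, fun f hf => ?_⟩
  simp_rw [ite_ne_eq_pairEnergy]
  refine tsum_pow_four_le_of_summable_sq (summable_of_hasFiniteSupport ?_)
  simpa [Function.HasFiniteSupport] using hf
end

section
/- Level repulsion via truncated moments: suppose a random variable X ≥ 0 and a tilted measure ν satisfying P^μ(X ≤ t) = E^ν[1(X ≤ t)X^β]/E^ν[X^β] for all t. If P^ν(X ≤ t) ≤ C·K·t·log N for all t > 0 and P^ν(X ≥ c/(K log N)) ≥ 1/2, then P^μ(X ≤ s) ≤ C′·(K s log N)^{β+1} for all s > 0, with C′ depending only on C, c, β. -/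
open MeasureTheory

/-! If `μ` is `ν` tilted by `X ^ β`, then `P^μ(X ≤ s)` is the truncated moment
`E^ν[1(X ≤ s) X ^ β]` divided by the full moment `E^ν[X ^ β]`. The truncated moment is at most
`s ^ β · P^ν(X ≤ s) ≲ s ^ β · K s log N`, while by Markov's inequality the full moment is at least
`(c / (K log N)) ^ β / 2`; the quotient is `(K s log N) ^ (β + 1)` up to a constant. -/

section TruncatedMoments

variable {Ω : Type*} [MeasurableSpace Ω] {μ ν : Measure Ω} [IsFiniteMeasure ν]
  {X : Ω → ℝ} {β : ℝ}

lemma mul_measureReal_le_integral_rpow (hX0 : ∀ ω, 0 ≤ X ω) (hβ : 0 ≤ β)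
    (hint : Integrable (fun ω => X ω ^ β) ν) {a : ℝ} (ha : 0 ≤ a) :
    a ^ β * ν.real {ω | a ≤ X ω} ≤ ∫ ω, X ω ^ β ∂ν := by
  have hsub : {ω | a ≤ X ω} ⊆ {ω | a ^ β ≤ X ω ^ β} := fun ω hω =>
    Real.rpow_le_rpow ha hω hβ
  calc a ^ β * ν.real {ω | a ≤ X ω} ≤ a ^ β * ν.real {ω | a ^ β ≤ X ω ^ β} :=
        mul_le_mul_of_nonneg_left (measureReal_mono hsub) (by positivity)
    _ ≤ ∫ ω, X ω ^ β ∂ν :=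
        mul_meas_ge_le_integral_of_nonneg
          (Filter.Eventually.of_forall fun ω => Real.rpow_nonneg (hX0 ω) β) hint _

lemma setIntegral_rpow_le_mul_measureReal (hX0 : ∀ ω, 0 ≤ X ω) (hβ : 0 ≤ β) (s : ℝ) :
    ∫ ω in {ω | X ω ≤ s}, X ω ^ β ∂ν ≤ s ^ β * ν.real {ω | X ω ≤ s} := by
  refine (Real.le_norm_self _).trans (norm_setIntegral_le_of_norm_le_const (measure_lt_top _ _) ?_)
  intro ω hω
  rw [Real.norm_of_nonneg (Real.rpow_nonneg (hX0 ω) β)]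
  exact Real.rpow_le_rpow (hX0 ω) hω hβ

lemma measureReal_le_div_of_tilted (hX0 : ∀ ω, 0 ≤ X ω) (hβ : 0 ≤ β) {s m : ℝ}
    (htilt : μ.real {ω | X ω ≤ s} * ∫ ω, X ω ^ β ∂ν = ∫ ω in {ω | X ω ≤ s}, X ω ^ β ∂ν)
    (hm : 0 < m) (hmM : m ≤ ∫ ω, X ω ^ β ∂ν) :
    μ.real {ω | X ω ≤ s} ≤ s ^ β * ν.real {ω | X ω ≤ s} / m := by
  rw [le_div_iff₀ hm]
  calc μ.real {ω | X ω ≤ s} * m ≤ μ.real {ω | X ω ≤ s} * ∫ ω, X ω ^ β ∂ν :=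
        mul_le_mul_of_nonneg_left hmM measureReal_nonneg
    _ = ∫ ω in {ω | X ω ≤ s}, X ω ^ β ∂ν := htilt
    _ ≤ s ^ β * ν.real {ω | X ω ≤ s} := setIntegral_rpow_le_mul_measureReal hX0 hβ s

end TruncatedMoments

lemma rpow_mul_div_half_rpow_div_eq {C c β K L s : ℝ} (hc : 0 < c) (hK : 0 < K) (hL : 0 < L)
    (hs : 0 < s) :
    s ^ β * (C * K * s * L) / ((c / (K * L)) ^ β / 2) = 2 * C / c ^ β * (K * s * L) ^ (β + 1) := by
  rw [Real.rpow_add_one (by positivity), Real.div_rpow hc.le (by positivity),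
    Real.mul_rpow hK.le hL.le, Real.mul_rpow (by positivity) hL.le, Real.mul_rpow hK.le hs.le]
  have : 0 < c ^ β := Real.rpow_pos_of_pos hc β
  have : 0 < K ^ β := Real.rpow_pos_of_pos hK β
  have : 0 < L ^ β := Real.rpow_pos_of_pos hL β
  field_simp

/-- Level repulsion via truncated moments: suppose `X ≥ 0` and a tilted probability
measure `ν` satisfy `P^μ(X ≤ t)·E^ν[X^β] = E^ν[1(X ≤ t)X^β]` for all `t`. If
`P^ν(X ≤ t) ≤ C·K·t·log N` for all `t > 0` and `P^ν(X ≥ c/(K log N)) ≥ 1/2`, then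
`P^μ(X ≤ s) ≤ C′·(K s log N)^{β+1}` for all `s > 0`, with `C′` depending only on
`C, c, β`. -/
theorem level_repulsion_truncated_moments (C c β : ℝ) (hC : 0 < C) (hc : 0 < c)
    (hβ : 0 < β) :
    ∃ C' : ℝ, 0 < C' ∧
      ∀ (Ω : Type) (_ : MeasurableSpace Ω) (μ ν : Measure Ω),
        IsProbabilityMeasure μ → IsProbabilityMeasure ν →
        ∀ X : Ω → ℝ, Measurable X → (∀ ω, 0 ≤ X ω) →
        ∀ K N : ℝ, 0 < K → 1 < N →
        Integrable (fun ω => X ω ^ β) ν →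
        (∀ t : ℝ, (μ {ω | X ω ≤ t}).toReal * (∫ ω, X ω ^ β ∂ν)
            = ∫ ω in {ω | X ω ≤ t}, X ω ^ β ∂ν) →
        (∀ t : ℝ, 0 < t → (ν {ω | X ω ≤ t}).toReal ≤ C * K * t * Real.log N) →
        ((1 : ℝ) / 2 ≤ (ν {ω | c / (K * Real.log N) ≤ X ω}).toReal) →
        ∀ s : ℝ, 0 < s →
          (μ {ω | X ω ≤ s}).toReal ≤ C' * (K * s * Real.log N) ^ (β + 1) := by
  refine ⟨2 * C / c ^ β, by positivity, ?_⟩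
  intro Ω _ μ ν _ _ X _ hX0 K N hK hN hint htilt hsmall hlarge s hs
  have hL : 0 < Real.log N := Real.log_pos hN
  set a := c / (K * Real.log N)
  have hmoment : a ^ β / 2 ≤ ∫ ω, X ω ^ β ∂ν :=
    calc a ^ β / 2 = a ^ β * (1 / 2) := by ring
      _ ≤ a ^ β * ν.real {ω | a ≤ X ω} := by gcongr; exact hlarge
      _ ≤ ∫ ω, X ω ^ β ∂ν := mul_measureReal_le_integral_rpow hX0 hβ.le hint (by positivity)
  calc μ.real {ω | X ω ≤ s} ≤ s ^ β * ν.real {ω | X ω ≤ s} / (a ^ β / 2) :=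
        measureReal_le_div_of_tilted hX0 hβ.le (htilt s) (by positivity) hmoment
    _ ≤ s ^ β * (C * K * s * Real.log N) / (a ^ β / 2) := by gcongr; exact hsmall s hs
    _ = 2 * C / c ^ β * (K * s * Real.log N) ^ (β + 1) :=
        rpow_mul_div_half_rpow_div_eq hc hK hL hs
end
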